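/- arXiv:1604.04390 — 2 statements merged into one kernel-verified Lean document; each statement's English description precedes it below -/
import Mathlib

section
/- Let σ : S → A and τ : T → A be maps of event structures, and S ∧ T their interaction with the maps Π₁ : S ∧ T → S and Π₂ : S ∧ T → T sending a prime secured bijection with top element (s, t) to s and t respectively. Then σ ∘ Π₁ = τ ∘ Π₂, and (S ∧ T, Π₁, Π₂) is a pullback of σ and τ in the category of event structures: for every event structure X and maps α : X → S, β : X → T with σ ∘ α = τ ∘ β there is a unique map ⟨α, β⟩ : X → S ∧ T with Π₁ ∘ ⟨α, β⟩ = α and Π₂ ∘ ⟨α, β⟩ = β. -/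
/-- An event structure presented as raw data: a set of events, a causality
relation and a consistency predicate on (finite) sets of events. -/
structure ES where
  Evt : Type
  le : Evt → Evt → Prop
  Con : Set (Set Evt)

namespace ES

/-- Strict causality. -/
def lt (E : ES) (a b : E.Evt) : Prop := E.le a b ∧ a ≠ b

/-- The axioms of event structures: `le` is a partial order, causes `[e]` are
finite, consistency is a nonempty collection of finite sets, closed under
subsets, containing all singletons, and closed under adding causal
dependencies. -/
def IsES (E : ES) : Prop :=
  (∀ e, E.le e e) ∧
  (∀ a b c, E.le a b → E.le b c → E.le a c) ∧
  (∀ a b, E.le a b → E.le b a → a = b) ∧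
  (∀ e, {e' | E.le e' e}.Finite) ∧
  E.Con.Nonempty ∧
  (∀ X ∈ E.Con, X.Finite) ∧
  (∀ e, ({e} : Set E.Evt) ∈ E.Con) ∧
  (∀ X ∈ E.Con, ∀ Y, Y ⊆ X → Y ∈ E.Con) ∧
  (∀ X ∈ E.Con, ∀ e ∈ X, ∀ e', E.le e' e → insert e' X ∈ E.Con)

/-- A (finite) configuration: a finite, consistent and down-closed set of events. -/
def Config (E : ES) (x : Set E.Evt) : Prop :=
  x.Finite ∧ (∀ Y, Y ⊆ x → Y.Finite → Y ∈ E.Con) ∧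
  ∀ e ∈ x, ∀ e', E.le e' e → e' ∈ x

/-- Immediate causality `e ⇢ e'`. -/
def imc (E : ES) (a b : E.Evt) : Prop :=
  E.lt a b ∧ ∀ c, E.le a c → E.le c b → c = a ∨ c = b

/-- Simple parallel composition of event structures. -/
def par (E F : ES) : ES where
  Evt := E.Evt ⊕ F.Evt
  le := fun p q =>
    match p, q with
    | Sum.inl a, Sum.inl b => E.le a b
    | Sum.inr a, Sum.inr b => F.le a b
    | _, _ => False
  Con := {X | Sum.inl ⁻¹' X ∈ E.Con ∧ Sum.inr ⁻¹' X ∈ F.Con}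

/-- Projection (hiding): restrict an event structure to a subset `V` of events. -/
def proj (E : ES) (V : Set E.Evt) : ES where
  Evt := ↥V
  le := fun a b => E.le a.val b.val
  Con := {X | Subtype.val '' X ∈ E.Con}

end ES

/-- A (total) map of event structures: preserves configurations and is
injective on each configuration. -/
def IsMap (E F : ES) (f : E.Evt → F.Evt) : Prop :=
  (∀ x, E.Config x → F.Config (f '' x)) ∧ ∀ x, E.Config x → Set.InjOn f x
/-- The relation `◁` generating the order on the graph `G` of a bijection:
`p ◁ q` when both are in `G` and `p.1 <_S q.1` or `p.2 <_T q.2`. -/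
def gRel (S T : ES) (G : Set (S.Evt × T.Evt)) :
    (S.Evt × T.Evt) → (S.Evt × T.Evt) → Prop :=
  fun p q => p ∈ G ∧ q ∈ G ∧ (S.lt p.1 q.1 ∨ T.lt p.2 q.2)

/-- The graph `G` is secured: the reflexive-transitive closure of `◁` on `G`
is antisymmetric (hence a partial order). -/
def SecuredOn (S T : ES) (G : Set (S.Evt × T.Evt)) : Prop :=
  ∀ p q, Relation.ReflTransGen (gRel S T G) p q →
    Relation.ReflTransGen (gRel S T G) q p → p = q

/-- `G` is (the graph of) a secured bijection `φ : x ≃ σ x = τ y ≃ y` between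
configurations `x ∈ C(S)` and `y ∈ C(T)`, an element of `SB(σ, τ)`. -/
def IsSecBij (S T A : ES) (σ : S.Evt → A.Evt) (τ : T.Evt → A.Evt)
    (G : Set (S.Evt × T.Evt)) : Prop :=
  S.Config (Prod.fst '' G) ∧ T.Config (Prod.snd '' G) ∧
  (∀ p ∈ G, σ p.1 = τ p.2) ∧
  (∀ s ∈ Prod.fst '' G, ∀ t ∈ Prod.snd '' G, σ s = τ t → (s, t) ∈ G) ∧
  σ '' (Prod.fst '' G) = τ '' (Prod.snd '' G) ∧
  SecuredOn S T G

/-- `G` has a top (greatest) element for the induced order. -/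
def IsPrime (S T : ES) (G : Set (S.Evt × T.Evt)) : Prop :=
  ∃ p ∈ G, ∀ q ∈ G, Relation.ReflTransGen (gRel S T G) q p

/-- The interaction `S ∧ T` of `σ : S → A` and `τ : T → A`: events are the
prime secured bijections, causality is inclusion of graphs, and a finite set
of events is consistent when the union of their graphs is a secured bijection. -/
def Interaction (S T A : ES) (σ : S.Evt → A.Evt) (τ : T.Evt → A.Evt) : ES where
  Evt := {G : Set (S.Evt × T.Evt) // IsSecBij S T A σ τ G ∧ IsPrime S T G}
  le := fun G G' => G.val ⊆ G'.val
  Con := {X | X.Finite ∧ IsSecBij S T A σ τ (⋃ G ∈ X, G.val)}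

/-- The top synchronized event of a prime secured bijection. -/
noncomputable def primeTop (S T A : ES) (σ : S.Evt → A.Evt) (τ : T.Evt → A.Evt)
    (G : (Interaction S T A σ τ).Evt) : S.Evt × T.Evt :=
  G.prop.2.choose

/-- The first projection `Π₁ : S ∧ T → S`. -/
noncomputable def InterPi1 (S T A : ES) (σ : S.Evt → A.Evt) (τ : T.Evt → A.Evt)
    (G : (Interaction S T A σ τ).Evt) : S.Evt :=
  (primeTop S T A σ τ G).1

/-- The second projection `Π₂ : S ∧ T → T`. -/
noncomputable def InterPi2 (S T A : ES) (σ : S.Evt → A.Evt) (τ : T.Evt → A.Evt)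
    (G : (Interaction S T A σ τ).Evt) : T.Evt :=
  (primeTop S T A σ τ G).2

/-! An event of `S ∧ T` lying inside a secured bijection `U` is the down-set of its top in `U`,
so it is determined by its top. The tops of the events of a configuration `y` of `S ∧ T` are
exactly the pairs in the union of the graphs of `y`, which makes `Π₁` and `Π₂` maps.

Given `α`, `β` with `σ ∘ α = τ ∘ β`, the graph of `a ↦ (α a, β a)` over a configuration of
`X` is a secured bijection: maps reflect causality within configurations, so `◁` on the graph
is reflected into the order of `X`. The mediating map sends `e` to the down-set of
`(α e, β e)` in the graph over `[e]`. Any other mediating map sends `[e]` to a configuration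
whose union of graphs is that same graph, so its value at `e` has the same top in the same
secured bijection. -/

open Relation Set

section EventStructures

variable {E F : ES} {x y : Set E.Evt}

theorem ES.Config.of_subset (hx : E.Config x) (hyx : y ⊆ x)
    (hy : ∀ e ∈ y, ∀ e', E.le e' e → e' ∈ y) : E.Config y :=
  ⟨hx.1.subset hyx, fun Y hY hYfin => hx.2.1 Y (hY.trans hyx) hYfin, hy⟩

theorem ES.IsES.config_history (hE : E.IsES) (e : E.Evt) : E.Config {e' | E.le e' e} := by
  obtain ⟨hrefl, htrans, -, hfin, -, -, hsingle, hsub, hinsert⟩ := hE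
  have hcon : insert e {e' | E.le e' e} ∈ E.Con := by
    refine (hfin e).induction_on_subset (motive := fun Y _ => insert e Y ∈ E.Con) _
      (by simpa using hsingle e) fun {a Y} ha _ _ ih => ?_
    rw [insert_comm]
    exact hinsert _ ih e (mem_insert e Y) a ha
  rw [insert_eq_of_mem (show e ∈ {e' | E.le e' e} from hrefl e)] at hcon
  exact ⟨hfin e, fun Y hY _ => hsub _ hcon Y hY, fun a ha e' he' => htrans e' a e he' ha⟩

theorem IsMap.le_of_le {f : E.Evt → F.Evt} (hE : E.IsES) (hf : IsMap E F f) (hx : E.Config x)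
    {a b : E.Evt} (ha : a ∈ x) (hb : b ∈ x) (hab : F.le (f a) (f b)) : E.le a b := by
  obtain ⟨c, hc, hca⟩ :=
    (hf.1 _ (hE.config_history b)).2.2 (f b) ⟨b, hE.1 b, rfl⟩ (f a) hab
  rwa [hf.2 x hx ha (hx.2.2 b hb c hc) hca.symm]

end EventStructures

section SecuredBijections

variable {S T A : ES} {σ : S.Evt → A.Evt} {τ : T.Evt → A.Evt} {G U W : Set (S.Evt × T.Evt)}

theorem reflTransGen_gRel_mono (hGU : G ⊆ U) {p q : S.Evt × T.Evt}
    (hpq : ReflTransGen (gRel S T G) p q) : ReflTransGen (gRel S T U) p q :=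
  ReflTransGen.mono (fun _ _ h => ⟨hGU h.1, hGU h.2.1, h.2.2⟩) _ _ hpq

theorem SecuredOn.mono (hGU : G ⊆ U) (hU : SecuredOn S T U) : SecuredOn S T G :=
  fun p q hpq hqp => hU p q (reflTransGen_gRel_mono hGU hpq) (reflTransGen_gRel_mono hGU hqp)

theorem image_fst_eq_image_snd (h : ∀ p ∈ G, σ p.1 = τ p.2) :
    σ '' (Prod.fst '' G) = τ '' (Prod.snd '' G) := by
  simp only [image_image]
  exact image_congr h

theorem isSecBij_of (hσ : IsMap S A σ) (hfst : S.Config (Prod.fst '' G))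
    (hsnd : T.Config (Prod.snd '' G)) (hsync : ∀ p ∈ G, σ p.1 = τ p.2)
    (hsec : SecuredOn S T G) : IsSecBij S T A σ τ G := by
  refine ⟨hfst, hsnd, hsync, ?_, image_fst_eq_image_snd hsync, hsec⟩
  rintro _ ⟨p, hp, rfl⟩ _ ⟨q, hq, rfl⟩ hpq
  have : p.1 = q.1 :=
    hσ.2 _ hfst (mem_image_of_mem _ hp) (mem_image_of_mem _ hq) (hpq.trans (hsync q hq).symm)
  rwa [this]

theorem IsSecBij.injOn_fst (hτ : IsMap T A τ) (hG : IsSecBij S T A σ τ G) :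
    InjOn Prod.fst G := fun p hp q hq h =>
  Prod.ext h <| hτ.2 _ hG.2.1 (mem_image_of_mem _ hp) (mem_image_of_mem _ hq) <| by
    rw [← hG.2.2.1 p hp, ← hG.2.2.1 q hq, h]

theorem IsSecBij.injOn_snd (hσ : IsMap S A σ) (hG : IsSecBij S T A σ τ G) :
    InjOn Prod.snd G := fun p hp q hq h =>
  Prod.ext (hσ.2 _ hG.1 (mem_image_of_mem _ hp) (mem_image_of_mem _ hq) <| by
    rw [hG.2.2.1 p hp, hG.2.2.1 q hq, h]) h

theorem IsSecBij.of_subset (hσ : IsMap S A σ) (hG : IsSecBij S T A σ τ G) (hWG : W ⊆ G)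
    (hfst : ∀ s ∈ Prod.fst '' W, ∀ s', S.le s' s → s' ∈ Prod.fst '' W)
    (hsnd : ∀ t ∈ Prod.snd '' W, ∀ t', T.le t' t → t' ∈ Prod.snd '' W) :
    IsSecBij S T A σ τ W :=
  isSecBij_of hσ (hG.1.of_subset (image_mono hWG) hfst) (hG.2.1.of_subset (image_mono hWG) hsnd)
    (fun p hp => hG.2.2.1 p (hWG hp)) (hG.2.2.2.2.2.mono hWG)

theorem IsSecBij.biUnion_of_subset {ι : Type*} {I : Set ι} {H : ι → Set (S.Evt × T.Evt)}
    (hσ : IsMap S A σ) (hU : IsSecBij S T A σ τ U)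
    (hH : ∀ i ∈ I, IsSecBij S T A σ τ (H i)) (hHU : ∀ i ∈ I, H i ⊆ U) :
    IsSecBij S T A σ τ (⋃ i ∈ I, H i) := by
  refine hU.of_subset hσ (iUnion₂_subset hHU) ?_ ?_
  · rintro _ ⟨p, hp, rfl⟩ s hs
    obtain ⟨i, hi, hpi⟩ := mem_iUnion₂.1 hp
    obtain ⟨q, hq, rfl⟩ := (hH i hi).1.2.2 p.1 (mem_image_of_mem _ hpi) s hs
    exact mem_image_of_mem _ (mem_biUnion hi hq)
  · rintro _ ⟨p, hp, rfl⟩ t ht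
    obtain ⟨i, hi, hpi⟩ := mem_iUnion₂.1 hp
    obtain ⟨q, hq, rfl⟩ := (hH i hi).2.1.2.2 p.2 (mem_image_of_mem _ hpi) t ht
    exact mem_image_of_mem _ (mem_biUnion hi hq)

def downIn (G : Set (S.Evt × T.Evt)) (p : S.Evt × T.Evt) : Set (S.Evt × T.Evt) :=
  {q | q ∈ G ∧ ReflTransGen (gRel S T G) q p}

theorem downIn_subset (G : Set (S.Evt × T.Evt)) (p : S.Evt × T.Evt) : downIn G p ⊆ G :=
  fun _ hq => hq.1

theorem reflTransGen_downIn {p q : S.Evt × T.Evt} (h : ReflTransGen (gRel S T G) q p) :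
    ReflTransGen (gRel S T (downIn G p)) q p := by
  induction h using ReflTransGen.head_induction_on with
  | refl => exact .refl
  | head hqc hcp ih => exact .head ⟨⟨hqc.1, .head hqc hcp⟩, ⟨hqc.2.1, hcp⟩, hqc.2.2⟩ ih

theorem isPrime_downIn {p : S.Evt × T.Evt} (hp : p ∈ G) : IsPrime S T (downIn G p) :=
  ⟨p, ⟨hp, .refl⟩, fun _ hq => reflTransGen_downIn hq.2⟩

theorem isSecBij_downIn (hσ : IsMap S A σ) (hG : IsSecBij S T A σ τ G) (p : S.Evt × T.Evt) :
    IsSecBij S T A σ τ (downIn G p) := by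
  refine hG.of_subset hσ (downIn_subset G p) ?_ ?_
  · rintro _ ⟨q, hq, rfl⟩ s hs
    obtain ⟨q', hq', rfl⟩ := hG.1.2.2 q.1 (mem_image_of_mem _ hq.1) s hs
    by_cases h : q'.1 = q.1
    · exact h ▸ mem_image_of_mem _ hq
    · exact mem_image_of_mem _ ⟨hq', .head ⟨hq', hq.1, .inl ⟨hs, h⟩⟩ hq.2⟩
  · rintro _ ⟨q, hq, rfl⟩ t ht
    obtain ⟨q', hq', rfl⟩ := hG.2.1.2.2 q.2 (mem_image_of_mem _ hq.1) t ht
    by_cases h : q'.2 = q.2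
    · exact h ▸ mem_image_of_mem _ hq
    · exact mem_image_of_mem _ ⟨hq', .head ⟨hq', hq.1, .inr ⟨ht, h⟩⟩ hq.2⟩

theorem IsSecBij.mem_of_gRel (hσ : IsMap S A σ) (hτ : IsMap T A τ) (hU : IsSecBij S T A σ τ U)
    (hG : IsSecBij S T A σ τ G) (hGU : G ⊆ U) {q c : S.Evt × T.Evt} (hqc : gRel S T U q c)
    (hc : c ∈ G) : q ∈ G := by
  rcases hqc.2.2 with h | h
  · obtain ⟨q', hq', hq'q⟩ := hG.1.2.2 c.1 (mem_image_of_mem _ hc) q.1 h.1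
    rwa [hU.injOn_fst hτ (hGU hq') hqc.1 hq'q] at hq'
  · obtain ⟨q', hq', hq'q⟩ := hG.2.1.2.2 c.2 (mem_image_of_mem _ hc) q.2 h.1
    rwa [hU.injOn_snd hσ (hGU hq') hqc.1 hq'q] at hq'

theorem IsSecBij.eq_downIn (hσ : IsMap S A σ) (hτ : IsMap T A τ) (hU : IsSecBij S T A σ τ U)
    (hG : IsSecBij S T A σ τ G) (hGU : G ⊆ U) {p : S.Evt × T.Evt} (hp : p ∈ G)
    (htop : ∀ q ∈ G, ReflTransGen (gRel S T G) q p) : G = downIn U p := by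
  refine Subset.antisymm (fun q hq => ⟨hGU hq, reflTransGen_gRel_mono hGU (htop q hq)⟩) ?_
  rintro q ⟨-, hqp⟩
  induction hqp using ReflTransGen.head_induction_on with
  | refl => exact hp
  | head hqc _ ih => exact hU.mem_of_gRel hσ hτ hG hGU hqc ih

variable {X : ES} {α : X.Evt → S.Evt} {β : X.Evt → T.Evt}

theorem securedOn_graph (hX : X.IsES) (hα : IsMap X S α) (hβ : IsMap X T β) {x : Set X.Evt}
    (hx : X.Config x) : SecuredOn S T ((fun a => (α a, β a)) '' x) := by
  have reflect : ∀ a ∈ x, ∀ q,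
      ReflTransGen (gRel S T ((fun a => (α a, β a)) '' x)) (α a, β a) q →
        ∃ b ∈ x, (α b, β b) = q ∧ X.le a b := by
    intro a ha q hq
    induction hq with
    | refl => exact ⟨a, ha, rfl, hX.1 a⟩
    | tail _ hrq ih =>
      obtain ⟨b, hb, rfl, hab⟩ := ih
      obtain ⟨c, hc, rfl⟩ := hrq.2.1
      refine ⟨c, hc, rfl, hX.2.1 a b c hab ?_⟩
      rcases hrq.2.2 with h | h
      exacts [hα.le_of_le hX hx hb hc h.1, hβ.le_of_le hX hx hb hc h.1]
  intro p q hpq hqp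
  obtain rfl | ⟨r, hpr, -⟩ := hpq.cases_head
  · rfl
  obtain ⟨a, ha, rfl⟩ := hpr.1
  obtain ⟨b, hb, rfl, hab⟩ := reflect a ha q hpq
  obtain ⟨c, hc, hca, hbc⟩ := reflect b hb _ hqp
  obtain rfl : c = a := hα.2 x hx hc ha (congrArg Prod.fst hca)
  rw [hX.2.2.1 c b hab hbc]

theorem isSecBij_graph (hX : X.IsES) (hσ : IsMap S A σ) (hα : IsMap X S α) (hβ : IsMap X T β)
    (hsync : ∀ e, σ (α e) = τ (β e)) {x : Set X.Evt} (hx : X.Config x) :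
    IsSecBij S T A σ τ ((fun a => (α a, β a)) '' x) :=
  isSecBij_of hσ (by rw [image_image]; exact hα.1 x hx) (by rw [image_image]; exact hβ.1 x hx)
    (by rintro _ ⟨a, -, rfl⟩; exact hsync a) (securedOn_graph hX hα hβ hx)

end SecuredBijections

namespace Interaction

variable {S T A : ES} {σ : S.Evt → A.Evt} {τ : T.Evt → A.Evt} {U : Set (S.Evt × T.Evt)}

theorem primeTop_mem (G : (Interaction S T A σ τ).Evt) : primeTop S T A σ τ G ∈ G.val :=
  G.prop.2.choose_spec.1

theorem primeTop_eq (G : (Interaction S T A σ τ).Evt) {p : S.Evt × T.Evt} (hp : p ∈ G.val)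
    (htop : ∀ q ∈ G.val, ReflTransGen (gRel S T G.val) q p) : primeTop S T A σ τ G = p :=
  G.prop.1.2.2.2.2.2 _ _ (htop _ (primeTop_mem G)) (G.prop.2.choose_spec.2 p hp)

theorem val_eq_downIn (hσ : IsMap S A σ) (hτ : IsMap T A τ) (hU : IsSecBij S T A σ τ U)
    {G : (Interaction S T A σ τ).Evt} (hGU : G.val ⊆ U) :
    G.val = downIn U (primeTop S T A σ τ G) :=
  hU.eq_downIn hσ hτ G.prop.1 hGU (primeTop_mem G) G.prop.2.choose_spec.2

theorem ext_of_primeTop (hσ : IsMap S A σ) (hτ : IsMap T A τ) (hU : IsSecBij S T A σ τ U)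
    {G G' : (Interaction S T A σ τ).Evt} (hGU : G.val ⊆ U) (hG'U : G'.val ⊆ U)
    (h : primeTop S T A σ τ G = primeTop S T A σ τ G') : G = G' :=
  Subtype.ext <| by rw [val_eq_downIn hσ hτ hU hGU, val_eq_downIn hσ hτ hU hG'U, h]

def primeAt (hσ : IsMap S A σ) {G : Set (S.Evt × T.Evt)} (hG : IsSecBij S T A σ τ G)
    {p : S.Evt × T.Evt} (hp : p ∈ G) : (Interaction S T A σ τ).Evt :=
  ⟨downIn G p, isSecBij_downIn hσ hG p, isPrime_downIn hp⟩

theorem primeTop_primeAt (hσ : IsMap S A σ) {G : Set (S.Evt × T.Evt)}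
    (hG : IsSecBij S T A σ τ G) {p : S.Evt × T.Evt} (hp : p ∈ G) :
    primeTop S T A σ τ (primeAt hσ hG hp) = p :=
  primeTop_eq _ ⟨hp, .refl⟩ fun _ hq => reflTransGen_downIn hq.2

theorem isSecBij_biUnion {y : Set (Interaction S T A σ τ).Evt}
    (hy : (Interaction S T A σ τ).Config y) : IsSecBij S T A σ τ (⋃ G ∈ y, G.val) :=
  (hy.2.1 y subset_rfl hy.1).2

theorem image_primeTop (hσ : IsMap S A σ) {y : Set (Interaction S T A σ τ).Evt}
    (hy : (Interaction S T A σ τ).Config y) : primeTop S T A σ τ '' y = ⋃ G ∈ y, G.val := by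
  refine Subset.antisymm (image_subset_iff.2 fun G hG => mem_biUnion hG (primeTop_mem G)) ?_
  intro p hp
  obtain ⟨G, hG, hpG⟩ := mem_iUnion₂.1 hp
  exact ⟨primeAt hσ G.prop.1 hpG, hy.2.2 G hG _ (downIn_subset _ _),
    primeTop_primeAt hσ _ hpG⟩

theorem isMap_interPi1 (hσ : IsMap S A σ) (hτ : IsMap T A τ) :
    IsMap (Interaction S T A σ τ) S (InterPi1 S T A σ τ) := by
  refine ⟨fun y hy => ?_, fun y hy G hG G' hG' h => ?_⟩
  · have : InterPi1 S T A σ τ '' y = Prod.fst '' ⋃ G ∈ y, G.val := by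
      rw [← image_primeTop hσ hy, image_image]; rfl
    exact this ▸ (isSecBij_biUnion hy).1
  · have hU := isSecBij_biUnion hy
    exact ext_of_primeTop hσ hτ hU (subset_biUnion_of_mem hG) (subset_biUnion_of_mem hG') <|
      hU.injOn_fst hτ (mem_biUnion hG (primeTop_mem G)) (mem_biUnion hG' (primeTop_mem G')) h

theorem isMap_interPi2 (hσ : IsMap S A σ) (hτ : IsMap T A τ) :
    IsMap (Interaction S T A σ τ) T (InterPi2 S T A σ τ) := by
  refine ⟨fun y hy => ?_, fun y hy G hG G' hG' h => ?_⟩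
  · have : InterPi2 S T A σ τ '' y = Prod.snd '' ⋃ G ∈ y, G.val := by
      rw [← image_primeTop hσ hy, image_image]; rfl
    exact this ▸ (isSecBij_biUnion hy).2.1
  · have hU := isSecBij_biUnion hy
    exact ext_of_primeTop hσ hτ hU (subset_biUnion_of_mem hG) (subset_biUnion_of_mem hG') <|
      hU.injOn_snd hσ (mem_biUnion hG (primeTop_mem G)) (mem_biUnion hG' (primeTop_mem G')) h

section Lift

variable {X : ES} {α : X.Evt → S.Evt} {β : X.Evt → T.Evt}
variable (hX : X.IsES) (hσ : IsMap S A σ) (hα : IsMap X S α) (hβ : IsMap X T β)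
  (hsync : ∀ e, σ (α e) = τ (β e))

def lift (e : X.Evt) : (Interaction S T A σ τ).Evt :=
  primeAt hσ (isSecBij_graph hX hσ hα hβ hsync (hX.config_history e))
    (mem_image_of_mem (fun a => (α a, β a)) (hX.1 e))

theorem lift_subset (e : X.Evt) :
    (lift hX hσ hα hβ hsync e).val ⊆ (fun a => (α a, β a)) '' {e' | X.le e' e} :=
  downIn_subset _ _

theorem primeTop_lift (e : X.Evt) :
    primeTop S T A σ τ (lift hX hσ hα hβ hsync e) = (α e, β e) :=
  primeTop_primeAt hσ _ _

theorem isMap_lift (hτ : IsMap T A τ) :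
    IsMap X (Interaction S T A σ τ) (lift hX hσ hα hβ hsync) := by
  have hsub : ∀ x, X.Config x → ∀ e ∈ x,
      (lift hX hσ hα hβ hsync e).val ⊆ (fun a => (α a, β a)) '' x := fun x hx e he =>
    (lift_subset hX hσ hα hβ hsync e).trans (image_mono fun a ha => hx.2.2 e he a ha)
  refine ⟨fun x hx => ⟨hx.1.image _, fun Y hY hYfin => ⟨hYfin, ?_⟩, ?_⟩,
    fun x hx e he e' he' hee' => ?_⟩
  · refine (isSecBij_graph hX hσ hα hβ hsync hx).biUnion_of_subset hσ (fun G _ => G.prop.1) ?_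
    rintro G hG
    obtain ⟨e, he, rfl⟩ := hY hG
    exact hsub x hx e he
  · rintro _ ⟨e, he, rfl⟩ G hGe
    obtain ⟨a, ha, hGa⟩ := lift_subset hX hσ hα hβ hsync e (hGe (primeTop_mem G))
    refine ⟨a, hx.2.2 e he a ha, ext_of_primeTop hσ hτ
      (isSecBij_graph hX hσ hα hβ hsync (hX.config_history e))
      (hsub _ (hX.config_history e) a ha) (hGe.trans (lift_subset hX hσ hα hβ hsync e)) ?_⟩
    rw [primeTop_lift]
    exact hGa
  · have htop := congrArg (primeTop S T A σ τ) hee'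
    rw [primeTop_lift, primeTop_lift] at htop
    exact hα.2 x hx he he' (congrArg Prod.fst htop)

theorem eq_lift (hτ : IsMap T A τ) {h : X.Evt → (Interaction S T A σ τ).Evt}
    (hh : IsMap X (Interaction S T A σ τ) h)
    (htop : ∀ e, primeTop S T A σ τ (h e) = (α e, β e)) (e : X.Evt) :
    h e = lift hX hσ hα hβ hsync e := by
  have hy := hh.1 _ (hX.config_history e)
  have hgraph : ⋃ G ∈ h '' {e' | X.le e' e}, G.val =
      (fun a => (α a, β a)) '' {e' | X.le e' e} := by
    rw [← image_primeTop hσ hy, image_image]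
    exact image_congr fun a _ => htop a
  refine ext_of_primeTop hσ hτ (isSecBij_graph hX hσ hα hβ hsync (hX.config_history e)) ?_
    (lift_subset hX hσ hα hβ hsync e) (by rw [htop, primeTop_lift])
  exact hgraph ▸ subset_biUnion_of_mem (mem_image_of_mem h (hX.1 e))

end Lift

end Interaction

theorem interaction_is_pullback_general
    (S T A : ES)
    (σ : S.Evt → A.Evt) (τ : T.Evt → A.Evt)
    (hσ : IsMap S A σ) (hτ : IsMap T A τ) :
    (∀ G, σ (InterPi1 S T A σ τ G) = τ (InterPi2 S T A σ τ G)) ∧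
    IsMap (Interaction S T A σ τ) S (InterPi1 S T A σ τ) ∧
    IsMap (Interaction S T A σ τ) T (InterPi2 S T A σ τ) ∧
    ∀ (X : ES), X.IsES → ∀ (α : X.Evt → S.Evt) (β : X.Evt → T.Evt),
      IsMap X S α → IsMap X T β → (∀ e, σ (α e) = τ (β e)) →
      ∃! h : X.Evt → (Interaction S T A σ τ).Evt,
        IsMap X (Interaction S T A σ τ) h ∧
        (∀ e, InterPi1 S T A σ τ (h e) = α e) ∧
        (∀ e, InterPi2 S T A σ τ (h e) = β e) := by
  refine ⟨fun G => G.prop.1.2.2.1 _ (Interaction.primeTop_mem G),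
    Interaction.isMap_interPi1 hσ hτ, Interaction.isMap_interPi2 hσ hτ,
    fun X hX α β hα hβ hsync => ?_⟩
  have htop := Interaction.primeTop_lift hX hσ hα hβ hsync
  refine ⟨Interaction.lift hX hσ hα hβ hsync,
    ⟨Interaction.isMap_lift hX hσ hα hβ hsync hτ, fun e => congrArg Prod.fst (htop e),
      fun e => congrArg Prod.snd (htop e)⟩, ?_⟩
  rintro h ⟨hh, hπ₁, hπ₂⟩
  exact funext <|
    Interaction.eq_lift hX hσ hα hβ hsync hτ hh fun e => Prod.ext (hπ₁ e) (hπ₂ e)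

/-- `(S ∧ T, Π₁, Π₂)` is a pullback of `σ` and `τ` in the
category of event structures. -/
theorem interaction_is_pullback
    (S T A : ES) (hS : S.IsES) (hT : T.IsES) (hA : A.IsES)
    (σ : S.Evt → A.Evt) (τ : T.Evt → A.Evt)
    (hσ : IsMap S A σ) (hτ : IsMap T A τ) :
    (∀ G, σ (InterPi1 S T A σ τ G) = τ (InterPi2 S T A σ τ G)) ∧
    IsMap (Interaction S T A σ τ) S (InterPi1 S T A σ τ) ∧
    IsMap (Interaction S T A σ τ) T (InterPi2 S T A σ τ) ∧
    ∀ (X : ES), X.IsES → ∀ (α : X.Evt → S.Evt) (β : X.Evt → T.Evt),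
      IsMap X S α → IsMap X T β → (∀ e, σ (α e) = τ (β e)) →
      ∃! h : X.Evt → (Interaction S T A σ τ).Evt,
        IsMap X (Interaction S T A σ τ) h ∧
        (∀ e, InterPi1 S T A σ τ (h e) = α e) ∧
        (∀ e, InterPi2 S T A σ τ (h e) = β e) :=
  interaction_is_pullback_general S T A σ τ hσ hτ
end

section
/- For any esp A, the copycat structure CC_A is an esp (an event structure, with polarities inherited from A^⊥ ∥ A), and the identity function on events is a pre-strategy ccc_A : CC_A → A^⊥ ∥ A. Moreover, for events (i,a), (j,a') of CC_A, one has (i,a) ≤_{CC_A} (j,a') if and only if either i = j and a ≤_A a', or i ≠ j and there exists a'' with a ≤_A a'' ≤_A a' such that (i, a'') is negative in CC_A. -/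
/-- An event structure with polarities (`true` = positive/Player,
`false` = negative/Opponent). -/
structure ESP extends ES where
  pol : Evt → Bool

namespace ESP

/-- The dual game: polarities reversed. -/
def dual (A : ESP) : ESP where
  toES := A.toES
  pol := fun a => !A.pol a

/-- Simple parallel composition of games. -/
def par (A B : ESP) : ESP where
  toES := A.toES.par B.toES
  pol := Sum.elim A.pol B.pol

end ESP

/-- A pre-strategy on the game `A`: a polarity-preserving map of event
structures `σ : S → A`. -/
def IsPreStrategy (S A : ESP) (σ : S.Evt → A.Evt) : Prop :=
  IsMap S.toES A.toES σ ∧ ∀ s, A.pol (σ s) = S.pol s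

/-- `polExt pol b x y` means `x ⊆ y` and all events of `y \ x` have polarity `b`;
so `polExt pol true x y` is `x ⊆⁺ y` and `polExt pol false x y` is `x ⊆⁻ y`. -/
def polExt {α : Type} (pol : α → Bool) (b : Bool) (x y : Set α) : Prop :=
  x ⊆ y ∧ ∀ a ∈ y, a ∉ x → pol a = b

/-- The Scott order: `x ⊑ y` iff `x ⊇⁻ (x ∩ y) ⊆⁺ y`. -/
def scottLE {α : Type} (pol : α → Bool) (x y : Set α) : Prop :=
  polExt pol false (x ∩ y) x ∧ polExt pol true (x ∩ y) y

/-- Courtesy: immediate causal links other than `− ⇢ +` are sent to immediate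
causal links of the game. -/
def Courteous (S A : ESP) (σ : S.Evt → A.Evt) : Prop :=
  ∀ s s', S.toES.imc s s' → (S.pol s, S.pol s') ≠ (false, true) →
    A.toES.imc (σ s) (σ s')

/-- Receptivity: every negative extension of `σ x` in the game is matched by a
unique extension of `x`. -/
def Receptive (S A : ESP) (σ : S.Evt → A.Evt) : Prop :=
  ∀ x, S.toES.Config x → ∀ a, A.pol a = false → a ∉ σ '' x →
    A.toES.Config (insert a (σ '' x)) →
    ∃! s, s ∉ x ∧ S.toES.Config (insert s x) ∧ σ s = a
/-- The generating relation of copycat causality on `A^⊥ ∥ A`: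
the causality of `A^⊥ ∥ A` together with the links from each negative
occurrence to the corresponding positive occurrence on the other side. -/
def ccGen (A : ESP) : (A.Evt ⊕ A.Evt) → (A.Evt ⊕ A.Evt) → Prop :=
  fun p q => (A.dual.par A).le p q ∨
    (∃ a, A.pol a = true ∧ p = Sum.inl a ∧ q = Sum.inr a) ∨
    (∃ a, A.pol a = false ∧ p = Sum.inr a ∧ q = Sum.inl a)

/-- The copycat structure `CC_A` on the game `A`. -/
def CC (A : ESP) : ESP where
  Evt := A.Evt ⊕ A.Evt
  le := Relation.ReflTransGen (ccGen A)
  Con := {X | {e | ∃ e' ∈ X, Relation.ReflTransGen (ccGen A) e e'} ∈ (A.dual.par A).Con}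
  pol := (A.dual.par A).pol

/-!
A generating link of copycat causality either stays inside one copy of `A`, where it is causality
of `A`, or jumps between the two copies of a single event. Hence a chain of links projects to a
chain in `A`, and a chain from one copy to the other jumps at some event that is negative on the
side it leaves. This closed form of `≤_{CC_A}` gives antisymmetry (a loop through both copies
would jump at one event of both polarities) and finite causes, and it shows that the down-closure
in `CC_A` of a set only adds copies of events below it in `A`; so the consistency axioms of `CC_A`
are inherited from `A^⊥ ∥ A` and from the consistency of causes `[a]` in `A`.
-/

namespace ES

variable {E F : ES}

namespace IsES

theorem le_refl (hE : E.IsES) (e : E.Evt) : E.le e e := hE.1 e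

theorem le_trans (hE : E.IsES) {a b c : E.Evt} (hab : E.le a b) (hbc : E.le b c) :
    E.le a c :=
  hE.2.1 a b c hab hbc

theorem le_antisymm (hE : E.IsES) {a b : E.Evt} (hab : E.le a b) (hba : E.le b a) : a = b :=
  hE.2.2.1 a b hab hba

theorem finite_causes (hE : E.IsES) (e : E.Evt) : {e' | E.le e' e}.Finite := hE.2.2.2.1 e

theorem con_nonempty (hE : E.IsES) : E.Con.Nonempty := hE.2.2.2.2.1

theorem finite_of_mem_con (hE : E.IsES) {X : Set E.Evt} (hX : X ∈ E.Con) : X.Finite :=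
  hE.2.2.2.2.2.1 X hX

theorem singleton_mem_con (hE : E.IsES) (e : E.Evt) : ({e} : Set E.Evt) ∈ E.Con :=
  hE.2.2.2.2.2.2.1 e

theorem mem_con_of_subset (hE : E.IsES) {X Y : Set E.Evt} (hX : X ∈ E.Con) (hYX : Y ⊆ X) :
    Y ∈ E.Con :=
  hE.2.2.2.2.2.2.2.1 X hX Y hYX

theorem insert_mem_con (hE : E.IsES) {X : Set E.Evt} (hX : X ∈ E.Con) {e e' : E.Evt}
    (he : e ∈ X) (he' : E.le e' e) : insert e' X ∈ E.Con :=
  hE.2.2.2.2.2.2.2.2 X hX e he e' he'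

theorem causes_mem_con (hE : E.IsES) (e : E.Evt) : {e' | E.le e' e} ∈ E.Con := by
  have key : ∀ Y : Set E.Evt, Y.Finite → Y ⊆ {e' | E.le e' e} → insert e Y ∈ E.Con := by
    intro Y hY
    induction Y, hY using Set.Finite.induction_on with
    | empty => simpa using hE.singleton_mem_con e
    | @insert e' Y _ _ ih =>
      intro hsub
      rw [Set.insert_comm]
      exact hE.insert_mem_con (ih ((Set.subset_insert _ _).trans hsub)) (Set.mem_insert e Y)
        (hsub (Set.mem_insert e' Y))
  have hcauses := key _ (hE.finite_causes e) le_rfl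
  rwa [Set.insert_eq_of_mem (show e ∈ {e' | E.le e' e} from hE.le_refl e)] at hcauses

theorem mem_par_con_of_subset (hE : E.IsES) (hF : F.IsES) {X Y : Set (E.Evt ⊕ F.Evt)}
    (hX : X ∈ (E.par F).Con) (hYX : Y ⊆ X) : Y ∈ (E.par F).Con :=
  ⟨hE.mem_con_of_subset hX.1 (Set.preimage_mono hYX),
    hF.mem_con_of_subset hX.2 (Set.preimage_mono hYX)⟩

theorem finite_of_mem_par_con (hE : E.IsES) (hF : F.IsES) {X : Set (E.Evt ⊕ F.Evt)}
    (hX : X ∈ (E.par F).Con) : X.Finite :=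
  Set.finite_preimage_inl_and_inr.1 ⟨hE.finite_of_mem_con hX.1, hF.finite_of_mem_con hX.2⟩

end IsES

end ES

namespace CC

variable {A : ESP}

/-- On the left copy `A.pol a'' = true` says that `a''` is negative in `A^⊥`. -/
def closedLe (A : ESP) : A.Evt ⊕ A.Evt → A.Evt ⊕ A.Evt → Prop
  | Sum.inl a, Sum.inl a' => A.le a a'
  | Sum.inr a, Sum.inr a' => A.le a a'
  | Sum.inl a, Sum.inr a' => ∃ a'', A.le a a'' ∧ A.le a'' a' ∧ A.pol a'' = true
  | Sum.inr a, Sum.inl a' => ∃ a'', A.le a a'' ∧ A.le a'' a' ∧ A.pol a'' = false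

theorem closedLe_tail (hA : A.IsES) {p q r : A.Evt ⊕ A.Evt} (hpq : closedLe A p q)
    (hqr : ccGen A q r) : closedLe A p r := by
  rcases hqr with hqr | ⟨a, ha, rfl, rfl⟩ | ⟨a, ha, rfl, rfl⟩
  · rcases p with a | a <;> rcases q with b | b <;> rcases r with c | c <;>
      simp only [closedLe, ESP.par, ESP.dual, ES.par] at hpq hqr ⊢
    all_goals first
      | exact hqr.elim
      | exact hA.le_trans hpq hqr
      | exact hpq.imp fun u hu => ⟨hu.1, hA.le_trans hu.2.1 hqr, hu.2.2⟩
  all_goals rcases p with b | b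
  all_goals first
    | exact ⟨a, hpq, hA.le_refl a, ha⟩
    | exact hpq.elim fun u hu => hA.le_trans hu.1 hu.2.1

theorem le_of_closedLe {p q : A.Evt ⊕ A.Evt} (h : closedLe A p q) : (CC A).le p q := by
  rcases p with a | a <;> rcases q with a' | a'
  · exact .single (Or.inl h)
  · obtain ⟨u, hau, hua', hu⟩ := h
    have cross : ccGen A (Sum.inl u) (Sum.inr u) := Or.inr (Or.inl ⟨u, hu, rfl, rfl⟩)
    exact .head (b := Sum.inl u) (Or.inl hau) (.head cross (.single (Or.inl hua')))
  · obtain ⟨u, hau, hua', hu⟩ := h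
    have cross : ccGen A (Sum.inr u) (Sum.inl u) := Or.inr (Or.inr ⟨u, hu, rfl, rfl⟩)
    exact .head (b := Sum.inr u) (Or.inl hau) (.head cross (.single (Or.inl hua')))
  · exact .single (Or.inl h)

theorem le_iff_closedLe (hA : A.IsES) {p q : A.Evt ⊕ A.Evt} :
    (CC A).le p q ↔ closedLe A p q := by
  refine ⟨fun h => ?_, le_of_closedLe⟩
  induction h with
  | refl => rcases p with a | a <;> exact hA.le_refl a
  | tail _ hstep ih => exact closedLe_tail hA ih hstep

theorem le_elim_of_le (hA : A.IsES) {p q : A.Evt ⊕ A.Evt} (h : (CC A).le p q) :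
    A.le (Sum.elim id id p) (Sum.elim id id q) := by
  rcases p with a | a <;> rcases q with a' | a' <;> have h := (le_iff_closedLe hA).1 h
  all_goals first
    | exact h
    | exact h.elim fun u hu => hA.le_trans hu.1 hu.2.1

theorem le_antisymm (hA : A.IsES) {p q : A.Evt ⊕ A.Evt} (hpq : (CC A).le p q)
    (hqp : (CC A).le q p) : p = q := by
  have hsame := hA.le_antisymm (le_elim_of_le hA hpq) (le_elim_of_le hA hqp)
  rw [le_iff_closedLe hA] at hpq hqp
  rcases p with a | a <;> rcases q with b | b <;>
    simp only [Sum.elim_inl, Sum.elim_inr, id] at hsame <;> subst hsame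
  all_goals first
    | rfl
    | obtain ⟨u, hau, hua, hu⟩ := hpq
      obtain ⟨v, hav, hva, hv⟩ := hqp
      obtain rfl := hA.le_antisymm hua hau
      obtain rfl := hA.le_antisymm hva hav
      cases hu.symm.trans hv

theorem finite_causes (hA : A.IsES) (p : A.Evt ⊕ A.Evt) : {e | (CC A).le e p}.Finite :=
  Set.finite_preimage_inl_and_inr.1
    ⟨(hA.finite_causes _).subset fun _ hb => le_elim_of_le hA hb,
      (hA.finite_causes _).subset fun _ hb => le_elim_of_le hA hb⟩

theorem isES (hA : A.IsES) : (CC A).IsES := by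
  refine ⟨fun _ => .refl, fun _ _ _ => .trans, fun _ _ => le_antisymm hA, finite_causes hA,
    ?nonempty, ?finite, ?singleton, ?subset, ?insert⟩
  case nonempty =>
    obtain ⟨X, hX⟩ := hA.con_nonempty
    exact ⟨∅, hA.mem_con_of_subset hX fun _ ⟨_, h, _⟩ => h.elim,
      hA.mem_con_of_subset hX fun _ ⟨_, h, _⟩ => h.elim⟩
  case finite =>
    exact fun X hX => (hA.finite_of_mem_par_con hA hX).subset fun e he => ⟨e, he, .refl⟩
  case singleton =>
    refine fun p => ⟨hA.mem_con_of_subset (hA.causes_mem_con (Sum.elim id id p)) ?_,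
      hA.mem_con_of_subset (hA.causes_mem_con (Sum.elim id id p)) ?_⟩ <;>
    exact fun _ ⟨_, rfl, hb⟩ => le_elim_of_le hA hb
  case subset =>
    exact fun X hX Y hYX =>
      hA.mem_par_con_of_subset hA hX fun e ⟨e', he', hle⟩ => ⟨e', hYX he', hle⟩
  case insert =>
    intro X hX e he e' he'
    refine hA.mem_par_con_of_subset hA hX ?_
    rintro z ⟨w, rfl | hw, hzw⟩
    exacts [⟨e, he, hzw.trans he'⟩, ⟨w, hw, hzw⟩]

theorem isPreStrategy_id (hA : A.IsES) : IsPreStrategy (CC A) (A.dual.par A) id := by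
  refine ⟨⟨fun x ⟨hfin, hcon, hdown⟩ => ?_, fun _ _ => Set.injOn_id _⟩, fun _ => rfl⟩
  erw [Set.image_id]
  exact ⟨hfin, fun Y hY hYfin => hA.mem_par_con_of_subset hA (hcon Y hY hYfin)
    fun e he => ⟨e, he, .refl⟩, fun e he e' hle => hdown e he e' (.single (Or.inl hle))⟩

end CC

/-- `CC_A` is an esp, the identity is a pre-strategy
`ccc_A : CC_A → A^⊥ ∥ A`, and causality in `CC_A` is characterised by:
`(i, a) ≤ (j, a')` iff either `i = j` and `a ≤_A a'`, or `i ≠ j` and there is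
`a''` with `a ≤_A a'' ≤_A a'` such that `(i, a'')` is negative in `CC_A`. -/
theorem copycat_is_esp_and_causality_characterisation
    (A : ESP) (hA : A.toES.IsES) :
    (CC A).toES.IsES ∧
    IsPreStrategy (CC A) (A.dual.par A) id ∧
    ∀ p q : A.Evt ⊕ A.Evt, (CC A).le p q ↔
      ((∃ a a', p = Sum.inl a ∧ q = Sum.inl a' ∧ A.le a a') ∨
       (∃ a a', p = Sum.inr a ∧ q = Sum.inr a' ∧ A.le a a') ∨
       (∃ a a' a'', p = Sum.inl a ∧ q = Sum.inr a' ∧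
          A.le a a'' ∧ A.le a'' a' ∧ (CC A).pol (Sum.inl a'') = false) ∨
       (∃ a a' a'', p = Sum.inr a ∧ q = Sum.inl a' ∧
          A.le a a'' ∧ A.le a'' a' ∧ (CC A).pol (Sum.inr a'') = false)) := by
  refine ⟨CC.isES hA, CC.isPreStrategy_id hA, fun p q => ?_⟩
  rw [CC.le_iff_closedLe hA]
  rcases p with a | a <;> rcases q with a' | a' <;>
    simp [CC.closedLe, CC, ESP.par, ESP.dual]
end
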